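/- arXiv:1112.1289 — 5 statements merged into one kernel-verified Lean document; each statement's English description precedes it below -/
import Mathlib

section
/- Let X be a complex separable Fréchet space, T : X → X a continuous linear operator, and P a family of finite positive Borel measures on 𝕋; call a set D ⊆ 𝕋 P-small if σ(D) = 0 (outer measure) for every σ ∈ P. Assume that for every analytic P-small set D ⊆ 𝕋 the linear span of ⋃_{λ ∈ 𝕋∖D} ker(T − λ·id) is dense in X. Let V = {(x,λ) ∈ X × 𝕋 : x ≠ 0 and Tx = λx}. Then there exists a set Z ⊆ V, closed in the subspace topology of V, such that: (1) for every relatively open set O ⊆ V with O ∩ Z ≠ ∅, the set {λ ∈ 𝕋 : ∃x, (x,λ) ∈ O ∩ Z} is not P-small; (2) the linear span of {x ∈ X : ∃λ ∈ 𝕋, (x,λ) ∈ Z} is dense in X. -/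
open MeasureTheory Filter Topology

noncomputable instance : MeasurableSpace Circle := borel Circle
instance : BorelSpace Circle := ⟨rfl⟩

/-- `D` is `P`-small: it is annihilated by every measure of the family `P`. -/
def PSmall (P : Set (Measure Circle)) (D : Set Circle) : Prop :=
  ∀ σ ∈ P, σ D = 0

/-!
Let `W` be the union of all open sets `U ⊆ X × 𝕋` such that the eigenvalues of the eigenpairs
in `U` form a `P`-small set, and take `Z = V \ W`. By the Lindelöf property `W` is a countable
union of such sets, so the eigenvalues `D` of the eigenpairs in `W` still form a `P`-small set;
this makes `Z` relatively closed and gives (1), since an open set meeting `Z` in a `P`-small set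
of eigenvalues would lie in `W`. The set `D` is the projection of a Borel set, hence analytic,
so the eigenvectors with eigenvalue outside `D` span a dense subspace. Each nonzero one of them
lies in the projection of `Z`, which gives (2).
-/

namespace PSmall

variable {P : Set (Measure Circle)} {D E : Set Circle}

theorem mono (hE : PSmall P E) (hDE : D ⊆ E) : PSmall P D :=
  fun σ hσ => measure_mono_null hDE (hE σ hσ)

theorem union (hD : PSmall P D) (hE : PSmall P E) : PSmall P (D ∪ E) :=
  fun σ hσ => measure_union_null (hD σ hσ) (hE σ hσ)

theorem biUnion {ι : Type*} {I : Set ι} (hI : I.Countable) {D : ι → Set Circle}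
    (hD : ∀ i ∈ I, PSmall P (D i)) : PSmall P (⋃ i ∈ I, D i) :=
  fun σ hσ => (measure_biUnion_null_iff hI).2 fun i hi => hD i hi σ hσ

end PSmall

section SmallLocus

variable {Y : Type*} [TopologicalSpace Y] (P : Set (Measure Circle)) (f : Y → Circle)
  (V : Set Y)

def smallLocus : Set Y :=
  ⋃₀ {U | IsOpen U ∧ PSmall P (f '' (U ∩ V))}

theorem isOpen_smallLocus : IsOpen (smallLocus P f V) :=
  isOpen_sUnion fun _ hU => hU.1

variable {P f V} in
theorem subset_smallLocus {U : Set Y} (hU : IsOpen U) (hsmall : PSmall P (f '' (U ∩ V))) :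
    U ⊆ smallLocus P f V :=
  Set.subset_sUnion_of_mem ⟨hU, hsmall⟩

theorem pSmall_image_smallLocus_inter [SecondCountableTopology Y] :
    PSmall P (f '' (smallLocus P f V ∩ V)) := by
  obtain ⟨C, hC, hCsmall, hCunion⟩ :=
    TopologicalSpace.isOpen_sUnion_countable {U | IsOpen U ∧ PSmall P (f '' (U ∩ V))}
      fun _ hU => hU.1
  refine (PSmall.biUnion hC fun U hU => (hCsmall hU).2).mono ?_
  rintro _ ⟨y, ⟨hyW, hyV⟩, rfl⟩
  rw [smallLocus, ← hCunion] at hyW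
  obtain ⟨U, hU, hyU⟩ := hyW
  exact Set.mem_biUnion hU ⟨y, ⟨hyU, hyV⟩, rfl⟩

theorem not_pSmall_image_inter_diff_smallLocus [SecondCountableTopology Y] {O : Set Y}
    (hO : IsOpen O) (hne : (O ∩ (V \ smallLocus P f V)).Nonempty) :
    ¬ PSmall P (f '' (O ∩ (V \ smallLocus P f V))) := by
  intro hsmall
  obtain ⟨y, hyO, -, hyW⟩ := hne
  refine hyW (subset_smallLocus hO ((hsmall.union (pSmall_image_smallLocus_inter P f V)).mono ?_)
    hyO)
  rintro _ ⟨x, ⟨hxO, hxV⟩, rfl⟩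
  by_cases hxW : x ∈ smallLocus P f V
  · exact Or.inr ⟨x, ⟨hxW, hxV⟩, rfl⟩
  · exact Or.inl ⟨x, ⟨hxO, hxV, hxW⟩, rfl⟩

end SmallLocus

theorem closure_diff_inter_eq_of_isOpen {Y : Type*} [TopologicalSpace Y] {V W : Set Y}
    (hW : IsOpen W) : closure (V \ W) ∩ V = V \ W := by
  refine Set.Subset.antisymm (fun y ⟨hyc, hyV⟩ => ⟨hyV, ?_⟩)
    fun y hy => ⟨subset_closure hy, hy.1⟩
  exact closure_minimal (fun _ hz => hz.2) hW.isClosed_compl hyc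

theorem analyticSet_inter_of_isOpen_of_isClosed {Y : Type*} [TopologicalSpace Y] [PolishSpace Y]
    {U F : Set Y} (hU : IsOpen U) (hF : IsClosed F) : AnalyticSet (U ∩ F) := by
  borelize Y
  exact (hU.measurableSet.inter hF.measurableSet).analyticSet

section Eigenpairs

variable {X : Type*} [AddCommGroup X] [Module ℂ X] [TopologicalSpace X] (T : X →L[ℂ] X)

def eigenpairs : Set (X × Circle) :=
  {p | p.1 ≠ 0 ∧ T p.1 = (p.2 : ℂ) • p.1}

theorem isClosed_setOf_apply_eq_smul [T2Space X] [ContinuousSMul ℂ X] :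
    IsClosed {p : X × Circle | T p.1 = (p.2 : ℂ) • p.1} :=
  isClosed_eq (T.continuous.comp continuous_fst)
    ((continuous_subtype_val.comp continuous_snd).smul continuous_fst)

theorem span_eigenvectors_le_span_fst_eigenpairs_diff (W : Set (X × Circle)) :
    Submodule.span ℂ (⋃ z : Circle, ⋃ (_ : z ∉ Prod.snd '' (W ∩ eigenpairs T)),
      {x : X | T x = (z : ℂ) • x}) ≤
    Submodule.span ℂ {x : X | ∃ z : Circle, (x, z) ∈ eigenpairs T \ W} := by
  refine Submodule.span_le.2 fun x hx => ?_
  simp only [Set.mem_iUnion, Set.mem_ofPred_eq] at hx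
  obtain ⟨z, hzD, hTx⟩ := hx
  rcases eq_or_ne x 0 with rfl | hx0
  · exact zero_mem _
  · exact Submodule.subset_span
      ⟨z, ⟨hx0, hTx⟩, fun hW => hzD ⟨(x, z), ⟨hW, hx0, hTx⟩, rfl⟩⟩

end Eigenpairs

theorem exhaustion_lemma_general
    {X : Type*} [AddCommGroup X] [Module ℂ X] [TopologicalSpace X]
    [ContinuousSMul ℂ X] [PolishSpace X]
    (T : X →L[ℂ] X)
    (P : Set (Measure Circle))
    (hspan : ∀ D : Set Circle, AnalyticSet D → PSmall P D →
      Dense (↑(Submodule.span ℂ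
        (⋃ z : Circle, ⋃ (_ : z ∉ D), {x : X | T x = (z : ℂ) • x})) : Set X)) :
    ∃ Z : Set (X × Circle),
      Z ⊆ {p : X × Circle | p.1 ≠ 0 ∧ T p.1 = (p.2 : ℂ) • p.1} ∧
      closure Z ∩ {p : X × Circle | p.1 ≠ 0 ∧ T p.1 = (p.2 : ℂ) • p.1} = Z ∧
      (∀ O : Set (X × Circle), IsOpen O → (O ∩ Z).Nonempty →
        ¬ PSmall P {z : Circle | ∃ x : X, (x, z) ∈ O ∩ Z}) ∧
      Dense (↑(Submodule.span ℂ {x : X | ∃ z : Circle, (x, z) ∈ Z}) : Set X) := by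
  set V := eigenpairs T
  set W := smallLocus P Prod.snd V
  have hW : IsOpen W := isOpen_smallLocus P Prod.snd V
  have proj_eq_image (S : Set (X × Circle)) : {z | ∃ x, (x, z) ∈ S} = Prod.snd '' S := by
    ext; simp
  refine ⟨V \ W, Set.sdiff_subset, closure_diff_inter_eq_of_isOpen hW, fun O hO hne => ?_, ?_⟩
  · rw [proj_eq_image]
    exact not_pSmall_image_inter_diff_smallLocus P Prod.snd V hO hne
  · have hWV : W ∩ V = (W ∩ {p | p.1 ≠ 0}) ∩ {p | T p.1 = (p.2 : ℂ) • p.1} := by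
      rw [Set.inter_assoc]; rfl
    have hD : AnalyticSet (Prod.snd '' (W ∩ V)) := by
      rw [hWV]
      refine AnalyticSet.image_of_continuous ?_ continuous_snd
      exact analyticSet_inter_of_isOpen_of_isClosed (hW.inter (isOpen_ne.preimage continuous_fst))
        (isClosed_setOf_apply_eq_smul T)
    exact (hspan _ hD (pSmall_image_smallLocus_inter P Prod.snd V)).mono
      (span_eigenvectors_le_span_fst_eigenpairs_diff T W)

/-- **Bayart–Matheron, Lemma 3.4 (exhaustion lemma).** -/
theorem exhaustion_lemma
    {X : Type*} [AddCommGroup X] [Module ℂ X] [TopologicalSpace X]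
    [IsTopologicalAddGroup X] [ContinuousSMul ℂ X] [LocallyConvexSpace ℝ X] [PolishSpace X]
    (T : X →L[ℂ] X)
    (P : Set (Measure Circle)) (hP : ∀ σ ∈ P, IsFiniteMeasure σ)
    (hspan : ∀ D : Set Circle, AnalyticSet D → PSmall P D →
      Dense (↑(Submodule.span ℂ
        (⋃ z : Circle, ⋃ (_ : z ∉ D), {x : X | T x = (z : ℂ) • x})) : Set X)) :
    ∃ Z : Set (X × Circle),
      Z ⊆ {p : X × Circle | p.1 ≠ 0 ∧ T p.1 = (p.2 : ℂ) • p.1} ∧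
      closure Z ∩ {p : X × Circle | p.1 ≠ 0 ∧ T p.1 = (p.2 : ℂ) • p.1} = Z ∧
      (∀ O : Set (X × Circle), IsOpen O → (O ∩ Z).Nonempty →
        ¬ PSmall P {z : Circle | ∃ x : X, (x, z) ∈ O ∩ Z}) ∧
      Dense (↑(Submodule.span ℂ {x : X | ∃ z : Circle, (x, z) ∈ Z}) : Set X) :=
  exhaustion_lemma_general T P hspan
end

section
/- Let X be a complex Banach space and let G = ∏_{i∈ℕ} ℤ/2ℤ be the Cantor group, with Haar probability measure m_G and ultrametric d. Suppose E : G → X is α-Hölderian for some α > 1 with constant C, i.e. ‖E(ω) − E(ω')‖ ≤ C·d(ω,ω')^α for all ω, ω' ∈ G. Then E has an absolutely convergent Fourier series: ∑_{I ∈ FIN} ‖Ê(γ_I)‖ < ∞, where the sum ranges over all finite subsets I of ℕ (i.e. the family (Ê(γ_I))_I is summable in norm). -/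
open MeasureTheory Filter Topology

/-!
For `i ∈ I`, translation by the point `eᵢ` with a single `1` in coordinate `i` preserves Haar
measure and flips the sign of `γ_I`, so `2 Ê(γ_I) = ∫ γ_I(ω) • (E ω - E (eᵢ + ω)) dω`. As `ω` and
`eᵢ + ω` agree below `i`, this gives `‖Ê(γ_I)‖ ≤ C 2^{-α i} / 2`, and we take `i = max I`.
Encoding `I` by the integer `N_I = ∑_{i ∈ I} 2^i < 2^{max I + 1}` turns the bound into
`‖Ê(γ_I)‖ ≤ C 2^{α-1} N_I^{-α}`, which is summable because `α > 1` and `I ↦ N_I` is injective.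
-/

/-- The value of a character of `ℤ/2ℤ`: `(-1)^v`. -/
noncomputable def cantorCharVal (v : ZMod 2) : ℂ := if v = 0 then 1 else -1

/-- The character `γ_I` of the Cantor group `G = ∏_{i∈ℕ} ℤ/2ℤ` associated with a finite set
`I ⊆ ℕ`: `γ_I(ω) = ∏_{i∈I} (-1)^{ω_i}`. -/
noncomputable def cantorChar (I : Finset ℕ) (ω : ℕ → ZMod 2) : ℂ :=
  ∏ i ∈ I, cantorCharVal (ω i)

theorem continuous_of_dist_le_of_eq_on_prefix {β Y : Type*} [TopologicalSpace β]
    [DiscreteTopology β] [PseudoMetricSpace Y] {f : (ℕ → β) → Y} {b : ℕ → ℝ}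
    (hb : Tendsto b atTop (𝓝 0))
    (hf : ∀ (n : ℕ) (ω ω' : ℕ → β), (∀ i < n, ω i = ω' i) → dist (f ω) (f ω') ≤ b n) :
    Continuous f := by
  refine continuous_iff_continuousAt.2 fun ω => Metric.tendsto_nhds.2 fun ε hε => ?_
  obtain ⟨n, hn⟩ := (hb.eventually (gt_mem_nhds hε)).exists
  have hcyl : PiNat.cylinder ω n ∈ 𝓝 ω :=
    (PiNat.isOpen_cylinder (fun _ => β) ω n).mem_nhds (PiNat.self_mem_cylinder ω n)
  filter_upwards [hcyl] with ω' hω'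
  exact (hf n ω' ω (PiNat.mem_cylinder_iff.1 hω')).trans_lt hn

theorem norm_integral_smul_le_of_map_add_eq_neg {G X : Type*} [AddGroup G] [MeasurableSpace G]
    [MeasurableAdd G] [NormedAddCommGroup X] [NormedSpace ℂ X] {m : Measure G} [IsFiniteMeasure m]
    {g : G} (hg : MeasurePreserving (g + ·) m m)
    {χ : G → ℂ} (hχ : ∀ ω, χ (g + ω) = -χ ω) (hχ_le : ∀ ω, ‖χ ω‖ ≤ 1) {F : G → X}
    (hF : Integrable (fun ω => χ ω • F ω) m) {δ : ℝ} (hδ : ∀ ω, ‖F ω - F (g + ω)‖ ≤ δ) :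
    ‖∫ ω, χ ω • F ω ∂m‖ ≤ δ / 2 * m.real Set.univ := by
  have htrans : ∫ ω, χ ω • F (g + ω) ∂m = -∫ ω, χ ω • F ω ∂m := by
    calc ∫ ω, χ ω • F (g + ω) ∂m = ∫ ω, -(χ (g + ω) • F (g + ω)) ∂m := by
          simp only [hχ, neg_smul, neg_neg]
      _ = -∫ ω, χ ω • F ω ∂m := by
        rw [integral_neg, hg.integral_comp (measurableEmbedding_addLeft g) fun ω => χ ω • F ω]
  have hF' : Integrable (fun ω => χ ω • F (g + ω)) m := by
    convert ((hg.integrable_comp_emb (measurableEmbedding_addLeft g)).2 hF).neg using 1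
    ext ω
    simp [hχ]
  have hdiff : ∫ ω, χ ω • (F ω - F (g + ω)) ∂m = (2 : ℂ) • ∫ ω, χ ω • F ω ∂m := by
    simp only [smul_sub]
    rw [integral_sub hF hF', htrans, sub_neg_eq_add, two_smul]
  have hbound : ‖∫ ω, χ ω • (F ω - F (g + ω)) ∂m‖ ≤ δ * m.real Set.univ := by
    refine norm_integral_le_of_norm_le_const (Eventually.of_forall fun ω => ?_)
    rw [norm_smul]
    exact (mul_le_of_le_one_left (norm_nonneg _) (hχ_le ω)).trans (hδ ω)
  rw [hdiff, norm_smul, RCLike.norm_two] at hbound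
  linarith

theorem norm_cantorCharVal (v : ZMod 2) : ‖cantorCharVal v‖ = 1 := by
  unfold cantorCharVal; split_ifs <;> simp

theorem cantorCharVal_one_add (v : ZMod 2) : cantorCharVal (1 + v) = -cantorCharVal v := by
  obtain rfl | rfl : v = 0 ∨ v = 1 := by decide +revert
  · simp [cantorCharVal]
  · simp [cantorCharVal, show (1 + 1 : ZMod 2) = 0 from rfl]

theorem norm_cantorChar (I : Finset ℕ) (ω : ℕ → ZMod 2) : ‖cantorChar I ω‖ = 1 := by
  simp [cantorChar, norm_cantorCharVal]

theorem continuous_cantorChar (I : Finset ℕ) : Continuous (cantorChar I) :=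
  continuous_finsetProd I fun i _ =>
    (continuous_of_discreteTopology (f := cantorCharVal)).comp (continuous_apply i)

theorem cantorChar_single_add {I : Finset ℕ} {i : ℕ} (hi : i ∈ I) (ω : ℕ → ZMod 2) :
    cantorChar I ((Pi.single i 1 : ℕ → ZMod 2) + ω) = -cantorChar I ω := by
  have hrest : ∀ j ∈ I.erase i,
      cantorCharVal (((Pi.single i 1 : ℕ → ZMod 2) + ω) j) = cantorCharVal (ω j) :=
    fun j hj => by simp [Finset.ne_of_mem_erase hj]
  rw [cantorChar, cantorChar, ← Finset.mul_prod_erase I _ hi, ← Finset.mul_prod_erase I _ hi,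
    Finset.prod_congr rfl hrest, Pi.add_apply, Pi.single_eq_same, cantorCharVal_one_add, neg_mul]

theorem summable_of_le_mul_two_rpow_neg_of_mem {f : Finset ℕ → ℝ} {K α : ℝ} (hα : 1 < α)
    (hf0 : ∀ I, 0 ≤ f I) (hf : ∀ (I : Finset ℕ) (i : ℕ), i ∈ I → f I ≤ K * 2 ^ (-(α * i))) :
    Summable f := by
  have hK : 0 ≤ K := by simpa using (hf0 {0}).trans (hf {0} 0 (Finset.mem_singleton_self 0))
  set N : Finset ℕ → ℕ := fun I => ∑ i ∈ I, 2 ^ i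
  have hsum : Summable fun I => K * 2 ^ α * (N I : ℝ) ^ (-α) :=
    ((Real.summable_nat_rpow.2 (by linarith)).mul_left (K * 2 ^ α)).comp_injective
      (Finset.geomSum_injective le_rfl)
  refine Summable.of_norm_bounded_eventually hsum ?_
  filter_upwards [eventually_cofinite_ne ∅] with I hI
  have hne : I.Nonempty := Finset.nonempty_iff_ne_empty.2 hI
  set i := I.max' hne
  have hNpos : 0 < (N I : ℝ) := Nat.cast_pos.2 (Finset.sum_pos (fun _ _ => by positivity) hne)
  have hNle : (N I : ℝ) ≤ 2 ^ (i + 1) := by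
    exact_mod_cast (Nat.geomSum_lt le_rfl fun j hj => Nat.lt_succ_of_le (I.le_max' j hj)).le
  rw [Real.norm_of_nonneg (hf0 I)]
  calc f I ≤ K * 2 ^ (-(α * i)) := hf I i (I.max'_mem hne)
    _ = K * 2 ^ α * ((2 : ℝ) ^ (i + 1)) ^ (-α) := by
      rw [← Real.rpow_natCast, ← Real.rpow_mul zero_le_two, mul_assoc, ← Real.rpow_add two_pos]
      push_cast
      ring_nf
    _ ≤ K * 2 ^ α * (N I : ℝ) ^ (-α) :=
      mul_le_mul_of_nonneg_left (Real.rpow_le_rpow_of_nonpos hNpos hNle (by linarith))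
        (by positivity)

theorem norm_integral_cantorChar_smul_le {X : Type*} [NormedAddCommGroup X] [NormedSpace ℂ X]
    {m : Measure (ℕ → ZMod 2)} [IsProbabilityMeasure m]
    (hm : ∀ g : ℕ → ZMod 2, MeasurePreserving (g + ·) m m) {E : (ℕ → ZMod 2) → X}
    (hE : Continuous E) {I : Finset ℕ} {i : ℕ} (hi : i ∈ I) {δ : ℝ}
    (hδ : ∀ ω ω' : ℕ → ZMod 2, (∀ j < i, ω j = ω' j) → ‖E ω - E ω'‖ ≤ δ) :
    ‖∫ ω, cantorChar I ω • E ω ∂m‖ ≤ δ / 2 := by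
  have hint : Integrable (fun ω => cantorChar I ω • E ω) m :=
    ((continuous_cantorChar I).smul hE).integrable_of_hasCompactSupport
      (HasCompactSupport.of_compactSpace _)
  simpa using norm_integral_smul_le_of_map_add_eq_neg (hm _) (cantorChar_single_add hi)
    (fun ω => (norm_cantorChar I ω).le) hint
    (fun ω => hδ ω _ fun j hj => by simp [hj.ne])

/-- **Bayart–Matheron, Lemma 4.1.** A super-Lipschitz (`α`-Hölderian with `α > 1`) map from
the Cantor group into a Banach space has an absolutely convergent Fourier series. Here `m` is
the Haar probability measure of the Cantor group (characterized as a translation-invariant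
probability measure), and the Hölder condition is expressed through the ultrametric
`d(ω,ω') = 2^{-n(ω,ω')}`: if `ω` and `ω'` agree on the first `n` coordinates, then
`‖E ω - E ω'‖ ≤ C·2^{-αn}`. -/
theorem cantor_superLipschitz_absolutely_convergent_fourier
    {X : Type*} [NormedAddCommGroup X] [NormedSpace ℂ X]
    (m : Measure (ℕ → ZMod 2)) (hprob : IsProbabilityMeasure m)
    (hinv : ∀ g : ℕ → ZMod 2, m.map (fun ω => g + ω) = m)
    (E : (ℕ → ZMod 2) → X) (α C : ℝ) (hα : 1 < α)
    (hHolder : ∀ (n : ℕ) (ω ω' : ℕ → ZMod 2), (∀ i < n, ω i = ω' i) →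
      ‖E ω - E ω'‖ ≤ C * (2 : ℝ) ^ (-(α * n))) :
    Summable (fun I : Finset ℕ => ‖∫ ω, cantorChar I ω • E ω ∂m‖) := by
  have hdecay : Tendsto (fun n : ℕ => C * (2 : ℝ) ^ (-(α * n))) atTop (𝓝 0) := by
    have hr : (2 : ℝ) ^ (-α) < 1 := Real.rpow_lt_one_of_one_lt_of_neg one_lt_two (by linarith)
    have hpow : ∀ n : ℕ, (2 : ℝ) ^ (-(α * n)) = ((2 : ℝ) ^ (-α)) ^ n := fun n => by
      rw [← Real.rpow_mul_natCast zero_le_two, neg_mul]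
    simpa only [hpow, mul_zero] using
      (tendsto_pow_atTop_nhds_zero_of_lt_one (by positivity) hr).const_mul C
  have hE : Continuous E :=
    continuous_of_dist_le_of_eq_on_prefix hdecay fun n ω ω' h => by
      simpa only [dist_eq_norm] using hHolder n ω ω' h
  have hm : ∀ g : ℕ → ZMod 2, MeasurePreserving (g + ·) m m :=
    fun g => ⟨measurable_const_add g, hinv g⟩
  refine summable_of_le_mul_two_rpow_neg_of_mem (K := C / 2) hα (fun I => norm_nonneg _)
    fun I i hi => ?_
  calc ‖∫ ω, cantorChar I ω • E ω ∂m‖ ≤ C * (2 : ℝ) ^ (-(α * i)) / 2 :=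
        norm_integral_cantorChar_smul_le hm hE hi (hHolder i)
    _ = C / 2 * (2 : ℝ) ^ (-(α * i)) := by ring
end

section
/- Let X be a complex Banach space and let G = ∏_{i∈ℕ} ℤ/2ℤ be the Cantor group, with Haar probability measure m_G and ultrametric d. Suppose E : G → X is α-Hölderian for some α > 1 with constant C, i.e. ‖E(ω) − E(ω')‖ ≤ C·d(ω,ω')^α for all ω, ω' ∈ G. Then for every n ∈ ℕ and every finite set I ⊆ ℕ with n ∈ I, the Fourier coefficient satisfies ‖Ê(γ_I)‖ ≤ (C/2)·2^{−αn}. -/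
/-!
Translating by the point `e_n` that is `1` exactly in coordinate `n` flips the sign of `γ_I`
when `n ∈ I`, while moving each point by distance `2^{-n}`. Translation invariance of `m_G`
therefore gives `2 Ê(γ_I) = ∫ γ_I(ω) (E(ω) - E(ω + e_n)) dm_G(ω)`, whose integrand has norm
at most `C 2^{-αn}`.
-/

open MeasureTheory Filter Topology

theorem norm_integral_smul_le_of_antiperiodic {G 𝕜 X : Type*} [MeasurableSpace G] [AddGroup G]
    [MeasurableAdd G] {μ : Measure G} [μ.IsAddRightInvariant] [IsFiniteMeasure μ]
    [NormedField 𝕜] [NormedAddCommGroup X] [NormedSpace ℝ X] [NormedSpace 𝕜 X]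
    {χ : G → 𝕜} {g : G} (hχ : Function.Antiperiodic χ g) (hχ_le : ∀ x, ‖χ x‖ ≤ 1)
    {f : G → X} {ε : ℝ} (hf : ∀ x, ‖f x - f (x + g)‖ ≤ ε) :
    ‖∫ x, χ x • f x ∂μ‖ ≤ ε / 2 * μ.real Set.univ := by
  have hε : 0 ≤ ε := (norm_nonneg _).trans (hf 0)
  by_cases hint : Integrable (fun x => χ x • f x) μ
  swap
  · rw [integral_undef hint, norm_zero]
    positivity
  have hshift_eq : (fun x => χ x • f (x + g)) = fun x => -(χ (x + g) • f (x + g)) := by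
    ext x
    rw [hχ x, neg_smul, neg_neg]
  have hshift_int : Integrable (fun x => χ x • f (x + g)) μ := by
    rw [hshift_eq]
    exact (hint.comp_add_right g).neg
  have hshift : ∫ x, χ x • f (x + g) ∂μ = -∫ x, χ x • f x ∂μ := by
    rw [hshift_eq, integral_neg, integral_add_right_eq_self (fun x => χ x • f x) g]
  have htwo : (2 : ℝ) • ∫ x, χ x • f x ∂μ = ∫ x, χ x • (f x - f (x + g)) ∂μ := by
    simp_rw [smul_sub]
    rw [integral_sub hint hshift_int, hshift, sub_neg_eq_add, two_smul]
  have hbound : ‖∫ x, χ x • (f x - f (x + g)) ∂μ‖ ≤ ε * μ.real Set.univ :=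
    norm_integral_le_of_norm_le_const <| Eventually.of_forall fun x =>
      (norm_smul_le _ _).trans <| (mul_le_of_le_one_left (norm_nonneg _) (hχ_le x)).trans (hf x)
  rw [← htwo, norm_smul, Real.norm_two] at hbound
  linarith

theorem cantorCharVal_add_one (v : ZMod 2) : cantorCharVal (v + 1) = -cantorCharVal v := by
  obtain rfl | rfl : v = 0 ∨ v = 1 := by revert v; decide
  · simp [cantorCharVal]
  · simp [cantorCharVal, show (1 + 1 : ZMod 2) = 0 by decide]

theorem cantorChar_antiperiodic {I : Finset ℕ} {n : ℕ} (hn : n ∈ I) :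
    Function.Antiperiodic (cantorChar I) (Pi.single n 1) := by
  intro ω
  unfold cantorChar
  rw [← Finset.mul_prod_erase I _ hn, ← Finset.mul_prod_erase I _ hn, Pi.add_apply,
    Pi.single_eq_same, cantorCharVal_add_one, neg_mul]
  congr 2
  refine Finset.prod_congr rfl fun i hi => ?_
  rw [Pi.add_apply, Pi.single_eq_of_ne (Finset.ne_of_mem_erase hi), add_zero]

theorem cantor_superLipschitz_fourier_coefficient_bound_general
    {X : Type*} [NormedAddCommGroup X] [NormedSpace ℂ X]
    (m : Measure (ℕ → ZMod 2)) (hprob : IsProbabilityMeasure m)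
    (hinv : ∀ g : ℕ → ZMod 2, m.map (fun ω => g + ω) = m)
    (E : (ℕ → ZMod 2) → X) (α C : ℝ)
    (hHolder : ∀ (n : ℕ) (ω ω' : ℕ → ZMod 2), (∀ i < n, ω i = ω' i) →
      ‖E ω - E ω'‖ ≤ C * (2 : ℝ) ^ (-(α * n))) :
    ∀ (n : ℕ) (I : Finset ℕ), n ∈ I →
      ‖∫ ω, cantorChar I ω • E ω ∂m‖ ≤ (C / 2) * (2 : ℝ) ^ (-(α * n)) := by
  intro n I hn
  have : m.IsAddLeftInvariant := ⟨hinv⟩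
  have hshift : ∀ ω, ‖E ω - E (ω + Pi.single n 1)‖ ≤ C * (2 : ℝ) ^ (-(α * n)) := fun ω =>
    hHolder n _ _ fun i hi => by rw [Pi.add_apply, Pi.single_eq_of_ne hi.ne, add_zero]
  simpa [mul_div_right_comm] using norm_integral_smul_le_of_antiperiodic (μ := m)
    (cantorChar_antiperiodic hn) (fun ω => (norm_cantorChar I ω).le) hshift

/-- **Bayart–Matheron, Fact in Lemma 4.1.** If `E` is `α`-Hölderian with `α > 1` and constant
`C` on the Cantor group (with respect to the ultrametric `d(ω,ω') = 2^{-n(ω,ω')}`, the Hölder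
condition being expressed by: if `ω` and `ω'` agree on the first `n` coordinates then
`‖E ω - E ω'‖ ≤ C·2^{-αn}`), then the Fourier coefficient of `E` at any character `γ_I` with
`n ∈ I` satisfies `‖Ê(γ_I)‖ ≤ (C/2)·2^{-αn}`. Here `m` is the Haar probability measure of the
Cantor group, characterized as a translation-invariant probability measure. -/
theorem cantor_superLipschitz_fourier_coefficient_bound
    {X : Type*} [NormedAddCommGroup X] [NormedSpace ℂ X]
    (m : Measure (ℕ → ZMod 2)) (hprob : IsProbabilityMeasure m)
    (hinv : ∀ g : ℕ → ZMod 2, m.map (fun ω => g + ω) = m)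
    (E : (ℕ → ZMod 2) → X) (α C : ℝ) (hα : 1 < α)
    (hHolder : ∀ (n : ℕ) (ω ω' : ℕ → ZMod 2), (∀ i < n, ω i = ω' i) →
      ‖E ω - E ω'‖ ≤ C * (2 : ℝ) ^ (-(α * n))) :
    ∀ (n : ℕ) (I : Finset ℕ), n ∈ I →
      ‖∫ ω, cantorChar I ω • E ω ∂m‖ ≤ (C / 2) * (2 : ℝ) ^ (-(α * n)) :=
  cantor_superLipschitz_fourier_coefficient_bound_general m hprob hinv E α C hHolder
end

section
/- Let (Ω, 𝔄, m) be a σ-finite measure space on a standard Borel space, let φ : Ω → 𝕋 be measurable, let H = L²(Ω, m; ℂ), and let H₁ ⊆ H be a closed linear subspace such that conj(φ)·u ∈ H₁ whenever u ∈ H₁ (H₁ is invariant under the adjoint M* of the unitary multiplication operator M_φ u = φ·u). Let S be an arbitrary set of bounded sequences ℕ → ℂ. Consider the assertions: (i) for all u, v ∈ H₁ the sequence (n ↦ ∫_Ω conj(φ(ω))ⁿ·u(ω)·conj(v(ω)) dm(ω))_{n∈ℕ} belongs to S; (ii) for all u ∈ H₁ and h ∈ H the sequence (n ↦ ∫_Ω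 conj(φ(ω))ⁿ·u(ω)·conj(h(ω)) dm(ω))_{n∈ℕ} belongs to S; (iii) for every S-small analytic set D ⊆ 𝕋, every u ∈ H₁ and every h ∈ H, ∫_{φ⁻¹(D)} u(ω)·conj(h(ω)) dm(ω) = 0 (i.e. the function 1_{φ⁻¹(D)}·h is orthogonal to H₁). Then (i) and (ii) are equivalent, and they imply (iii). -/
open MeasureTheory Filter Topology

/-- `S`-continuity of a measure on the circle: the sequence of its nonnegative Fourier
coefficients belongs to `S`. -/
def SContinuous (S : Set (ℕ → ℂ)) (σ : Measure Circle) : Prop :=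
  (fun n : ℕ => ∫ z : Circle, (z : ℂ) ^ (-(n : ℤ)) ∂σ) ∈ S

/-- `S`-small subsets of the circle. -/
def SSmall (S : Set (ℕ → ℂ)) (D : Set Circle) : Prop :=
  ∀ σ : Measure Circle, IsFiniteMeasure σ → SContinuous S σ → σ D = 0


/-!
For `u ∈ H₁` every `conj(φ)ⁿ u` lies in `H₁`, so the correlations of `u` with `h ∈ H` only see
the orthogonal projection of `h` onto `H₁`; this gives (i) ⇔ (ii). The correlations of `u` with
itself are the Fourier coefficients of the spectral measure `σ_u = φ_*(|u|² m)`, which is therefore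
`S`-continuous under (i). Hence `σ_u` vanishes on an `S`-small `D`, i.e. `u = 0` a.e. on `φ⁻¹(D)`.
-/

open ComplexConjugate

section Invariance

variable {Ω : Type*} [MeasurableSpace Ω] {m : Measure Ω} {K : Submodule ℂ (Lp ℂ 2 m)}
  {ψ : Ω → ℂ}

theorem exists_mem_ae_eq_pow_mul
    (hK : ∀ u ∈ K, ∃ v ∈ K, (v : Ω → ℂ) =ᵐ[m] fun ω => ψ ω * u ω) (n : ℕ) {u : Lp ℂ 2 m}
    (hu : u ∈ K) : ∃ v ∈ K, (v : Ω → ℂ) =ᵐ[m] fun ω => ψ ω ^ n * u ω := by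
  induction n with
  | zero => exact ⟨u, hu, .of_forall fun ω => by simp⟩
  | succ n ih =>
    obtain ⟨v, hvK, hv⟩ := ih
    obtain ⟨w, hwK, hw⟩ := hK v hvK
    refine ⟨w, hwK, ?_⟩
    filter_upwards [hv, hw] with ω hvω hwω
    rw [hwω, hvω, pow_succ]
    ring

theorem MeasureTheory.L2.integral_mul_conj_eq_inner (v h : Lp ℂ 2 m) :
    ∫ ω, v ω * conj (h ω) ∂m = inner ℂ h v := by
  simp only [L2.inner_def, RCLike.inner_apply]

theorem integral_pow_mul_mul_conj_starProjection [K.HasOrthogonalProjection]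
    (hK : ∀ u ∈ K, ∃ v ∈ K, (v : Ω → ℂ) =ᵐ[m] fun ω => ψ ω * u ω) {u : Lp ℂ 2 m}
    (hu : u ∈ K) (h : Lp ℂ 2 m) (n : ℕ) :
    ∫ ω, ψ ω ^ n * u ω * conj (h ω) ∂m
      = ∫ ω, ψ ω ^ n * u ω * conj (K.starProjection h ω) ∂m := by
  obtain ⟨v, hvK, hv⟩ := exists_mem_ae_eq_pow_mul hK n hu
  have hv' (g : Lp ℂ 2 m) :
      ∫ ω, ψ ω ^ n * u ω * conj (g ω) ∂m = inner ℂ g v := by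
    rw [← L2.integral_mul_conj_eq_inner]
    refine integral_congr_ae ?_
    filter_upwards [hv] with ω hω
    rw [hω]
  rw [hv', hv', K.inner_starProjection_left_eq_right, K.starProjection_eq_self_iff.mpr hvK]

end Invariance

section SpectralMeasure

variable {Ω : Type*} [MeasurableSpace Ω] {m : Measure Ω} {φ : Ω → Circle}

/-- The spectral measure `σ_u = φ_*(|u|² m)` of the multiplication operator `M_φ` at `u`. -/
noncomputable def spectralMeasure (φ : Ω → Circle) (u : Lp ℂ 2 m) : Measure Circle :=
  (m.withDensity fun ω => ((‖u ω‖₊ ^ 2 : NNReal) : ENNReal)).map φ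

instance (u : Lp ℂ 2 m) : IsFiniteMeasure (spectralMeasure φ u) := by
  have : IsFiniteMeasure (m.withDensity fun ω => ((‖u ω‖₊ ^ 2 : NNReal) : ENNReal)) := by
    refine isFiniteMeasure_withDensity ?_
    have := lintegral_rpow_enorm_lt_top_of_eLpNorm_lt_top two_ne_zero ENNReal.ofNat_ne_top
      (Lp.memLp u).eLpNorm_lt_top
    simpa [enorm_eq_nnnorm] using this.ne
  unfold spectralMeasure
  infer_instance

theorem integral_zpow_neg_spectralMeasure (hφ : Measurable φ) (u : Lp ℂ 2 m) (n : ℕ) :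
    ∫ z, (z : ℂ) ^ (-(n : ℤ)) ∂spectralMeasure φ u
      = ∫ ω, conj (φ ω : ℂ) ^ n * u ω * conj (u ω) ∂m := by
  have hcont : Continuous fun z : Circle => (z : ℂ) ^ (-(n : ℤ)) := by
    simp only [← Circle.coe_zpow]
    exact continuous_subtype_val.comp (continuous_zpow _)
  rw [spectralMeasure, integral_map hφ.aemeasurable hcont.aestronglyMeasurable,
    integral_withDensity_eq_integral_smul₀
      ((Lp.aestronglyMeasurable u).aemeasurable.nnnorm.pow_const 2)]
  refine integral_congr_ae (.of_forall fun ω => ?_)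
  beta_reduce
  rw [zpow_neg, zpow_natCast, ← inv_pow, ← Circle.coe_inv, Circle.coe_inv_eq_conj, mul_assoc,
    Complex.mul_conj', NNReal.smul_def, Complex.real_smul]
  push_cast
  ring

theorem ae_restrict_preimage_eq_zero_of_spectralMeasure_eq_zero (hφ : Measurable φ)
    {u : Lp ℂ 2 m} {D : Set Circle} (hD : spectralMeasure φ u D = 0) :
    (u : Ω → ℂ) =ᵐ[m.restrict (φ ⁻¹' D)] 0 := by
  have hpre := nonpos_iff_eq_zero.mp ((Measure.le_map_apply hφ.aemeasurable D).trans_eq hD)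
  rw [withDensity_apply_eq_zero'
    ((Lp.aestronglyMeasurable u).aemeasurable.nnnorm.pow_const 2).coe_nnreal_ennreal] at hpre
  change m.restrict (φ ⁻¹' D) ((u : Ω → ℂ) ⁻¹' {0})ᶜ = 0
  rw [Measure.restrict_apply
    ((Lp.stronglyMeasurable u).measurable (measurableSet_singleton 0)).compl]
  simpa [Set.compl_def] using hpre

end SpectralMeasure

theorem multiplication_operator_SMixing_general
    {Ω : Type*} [MeasurableSpace Ω]
    (m : Measure Ω)
    (φ : Ω → Circle) (hφ : Measurable φ)
    (H₁ : Submodule ℂ (Lp ℂ 2 m)) (hH₁ : IsClosed (H₁ : Set (Lp ℂ 2 m)))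
    (hinv : ∀ u : Lp ℂ 2 m, u ∈ H₁ → ∃ v : Lp ℂ 2 m, v ∈ H₁ ∧
      (v : Ω → ℂ) =ᵐ[m] fun ω => (starRingEnd ℂ) ((φ ω : ℂ)) * u ω)
    (S : Set (ℕ → ℂ)) :
    ((∀ u ∈ H₁, ∀ v ∈ H₁,
        (fun n : ℕ => ∫ ω, ((starRingEnd ℂ) ((φ ω : ℂ))) ^ n * u ω *
          (starRingEnd ℂ) (v ω) ∂m) ∈ S) ↔
      (∀ u ∈ H₁, ∀ h : Lp ℂ 2 m,
        (fun n : ℕ => ∫ ω, ((starRingEnd ℂ) ((φ ω : ℂ))) ^ n * u ω *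
          (starRingEnd ℂ) (h ω) ∂m) ∈ S)) ∧
    ((∀ u ∈ H₁, ∀ v ∈ H₁,
        (fun n : ℕ => ∫ ω, ((starRingEnd ℂ) ((φ ω : ℂ))) ^ n * u ω *
          (starRingEnd ℂ) (v ω) ∂m) ∈ S) →
      ∀ D : Set Circle, AnalyticSet D → SSmall S D →
        ∀ u ∈ H₁, ∀ h : Lp ℂ 2 m,
          (∫ ω in φ ⁻¹' D, u ω * (starRingEnd ℂ) (h ω) ∂m) = 0) := by
  have : CompleteSpace H₁ := hH₁.completeSpace_coe
  refine ⟨⟨fun hmix u hu h => ?_, fun hmix u hu v _ => hmix u hu v⟩, ?_⟩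
  · simpa only [integral_pow_mul_mul_conj_starProjection hinv hu h]
      using hmix u hu _ (H₁.starProjection_apply_mem h)
  · intro hmix D _ hD u hu h
    have hσ : spectralMeasure φ u D = 0 := hD _ inferInstance <| by
      simpa only [SContinuous, integral_zpow_neg_spectralMeasure hφ] using hmix u hu u hu
    refine integral_eq_zero_of_ae ?_
    filter_upwards [ae_restrict_preimage_eq_zero_of_spectralMeasure_eq_zero hφ hσ] with ω hω
    simp [hω]

/-- **Bayart–Matheron, Lemma 3.3.** Let `M = M_φ` be the unitary multiplication operator on
`H = L²(Ω,m)` associated with a measurable `φ : Ω → 𝕋`, and let `H₁` be a closed subspace of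
`H` invariant under `M*` (multiplication by `conj φ`). Consider:
(i) `M*` is `S`-mixing on `H₁`; (ii) the analogous property for `u ∈ H₁`, `h ∈ H`;
(iii) `1_{φ⁻¹(D)}·h ⊥ H₁` for every `S`-small analytic `D ⊆ 𝕋` and `h ∈ H`.
Then (i) and (ii) are equivalent and imply (iii). -/
theorem multiplication_operator_SMixing
    {Ω : Type*} [MeasurableSpace Ω] [StandardBorelSpace Ω]
    (m : Measure Ω) [SigmaFinite m]
    (φ : Ω → Circle) (hφ : Measurable φ)
    (H₁ : Submodule ℂ (Lp ℂ 2 m)) (hH₁ : IsClosed (H₁ : Set (Lp ℂ 2 m)))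
    (hinv : ∀ u : Lp ℂ 2 m, u ∈ H₁ → ∃ v : Lp ℂ 2 m, v ∈ H₁ ∧
      (v : Ω → ℂ) =ᵐ[m] fun ω => (starRingEnd ℂ) ((φ ω : ℂ)) * u ω)
    (S : Set (ℕ → ℂ)) :
    ((∀ u ∈ H₁, ∀ v ∈ H₁,
        (fun n : ℕ => ∫ ω, ((starRingEnd ℂ) ((φ ω : ℂ))) ^ n * u ω *
          (starRingEnd ℂ) (v ω) ∂m) ∈ S) ↔
      (∀ u ∈ H₁, ∀ h : Lp ℂ 2 m,
        (fun n : ℕ => ∫ ω, ((starRingEnd ℂ) ((φ ω : ℂ))) ^ n * u ω *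
          (starRingEnd ℂ) (h ω) ∂m) ∈ S)) ∧
    ((∀ u ∈ H₁, ∀ v ∈ H₁,
        (fun n : ℕ => ∫ ω, ((starRingEnd ℂ) ((φ ω : ℂ))) ^ n * u ω *
          (starRingEnd ℂ) (v ω) ∂m) ∈ S) →
      ∀ D : Set Circle, AnalyticSet D → SSmall S D →
        ∀ u ∈ H₁, ∀ h : Lp ℂ 2 m,
          (∫ ω in φ ⁻¹' D, u ω * (starRingEnd ℂ) (h ω) ∂m) = 0) :=
  multiplication_operator_SMixing_general m φ hφ H₁ hH₁ hinv S
end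

section
/- Let X be a complex Banach space and T : X → X a continuous linear operator. Assume there exists u ∈ X such that Tⁿu ≠ 0 for every n ≥ 0 and ∑_{n=0}^∞ 1/‖Tⁿu‖ < ∞. Then the set HC(T) of hypercyclic vectors for T is Haar-null: there exists a Borel probability measure ν on X such that ν(x + HC(T)) = 0 (outer measure) for every x ∈ X. -/
open MeasureTheory Filter Topology

/-- The set of hypercyclic vectors of a continuous linear operator. -/
def HypercyclicVectors {X : Type*} [NormedAddCommGroup X] [NormedSpace ℂ X]
    (T : X →L[ℂ] X) : Set X :=
  {x : X | Dense (Set.range fun n : ℕ => (T ^ n) x)}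

/-- A Haar-null set in the sense of Christensen. -/
def IsHaarNull {X : Type*} [NormedAddCommGroup X] [NormedSpace ℂ X] [MeasurableSpace X]
    (A : Set X) : Prop :=
  ∃ ν : Measure X, IsProbabilityMeasure ν ∧ ∀ x : X, ν ((fun a => x + a) '' A) = 0

/-! Let `ν` be normalized Lebesgue measure on the unit disc of `ℂ`, carried onto the line `ℂ u`
by `ζ ↦ ζ • u`. A dense orbit returns to the unit ball infinitely often, so if `ζ • u - x` is
hypercyclic then `‖ζ • Tⁿu - Tⁿx‖ < 1` for infinitely many `n`. Testing against a norming
functional of `Tⁿu` puts `ζ` in a disc of radius `1 / ‖Tⁿu‖` for each such `n`, and since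
`∑ 1 / ‖Tⁿu‖² < ∞`, Borel–Cantelli makes this set of `ζ` Lebesgue-null. -/

open Metric ProbabilityTheory

theorem DenseRange.frequently_mem {X : Type*} [TopologicalSpace X] [T1Space X]
    [∀ x : X, NeBot (𝓝[≠] x)] {f : ℕ → X} (hf : DenseRange f) {U : Set X} (hU : IsOpen U)
    (hne : U.Nonempty) : ∃ᶠ n in atTop, f n ∈ U := by
  refine frequently_atTop.2 fun N => ?_
  obtain ⟨_, hU, ⟨n, rfl⟩, hn⟩ :=
    (hf.sdiff_finite ((Set.finite_Iio N).image f)).inter_open_nonempty U hU hne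
  exact ⟨n, not_lt.1 fun h => hn ⟨n, h, rfl⟩, hU⟩

theorem exists_setOf_norm_smul_sub_lt_subset_ball {𝕜 E : Type*} [RCLike 𝕜]
    [NormedAddCommGroup E] [NormedSpace 𝕜 E] {v : E} (hv : v ≠ 0) (w : E) (ε : ℝ) :
    ∃ c : 𝕜, {ζ : 𝕜 | ‖ζ • v - w‖ < ε} ⊆ ball c (ε / ‖v‖) := by
  obtain ⟨g, hg, hgv⟩ := exists_dual_vector 𝕜 v (norm_ne_zero_iff.2 hv)
  have hv_pos : 0 < ‖v‖ := norm_pos_iff.2 hv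
  refine ⟨g w / ‖v‖, fun ζ hζ => ?_⟩
  have hg_apply : g (ζ • v - w) = ‖v‖ * (ζ - g w / ‖v‖) := by
    have : (‖v‖ : 𝕜) ≠ 0 := RCLike.ofReal_ne_zero.2 hv_pos.ne'
    rw [map_sub, map_smul, hgv, smul_eq_mul]
    field_simp
  have hle : ‖v‖ * ‖ζ - g w / ‖v‖‖ ≤ ‖ζ • v - w‖ := by
    calc ‖v‖ * ‖ζ - g w / ‖v‖‖ = ‖g (ζ • v - w)‖ := by
          rw [hg_apply, norm_mul, RCLike.norm_ofReal, abs_of_pos hv_pos]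
      _ ≤ ‖g‖ * ‖ζ • v - w‖ := g.le_opNorm _
      _ = ‖ζ • v - w‖ := by rw [hg, one_mul]
  rw [mem_ball, dist_eq_norm, lt_div_iff₀' hv_pos]
  exact hle.trans_lt hζ

theorem Summable.sq_of_nonneg {r : ℕ → ℝ} (hr : Summable r) (h0 : ∀ n, 0 ≤ r n) :
    Summable fun n => r n ^ 2 := by
  refine hr.of_norm_bounded_eventually_nat ?_
  filter_upwards [hr.tendsto_atTop_zero.eventually_le_const one_pos] with n hn
  rw [norm_pow, Real.norm_of_nonneg (h0 n), sq]
  exact mul_le_of_le_one_left (h0 n) hn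

theorem Complex.volume_limsup_ball_eq_zero {c : ℕ → ℂ} {r : ℕ → ℝ} (hr0 : ∀ n, 0 ≤ r n)
    (hr : Summable fun n => r n ^ 2) :
    volume (limsup (fun n => ball (c n) (r n)) atTop) = 0 := by
  refine measure_limsup_atTop_eq_zero (ne_top_of_le_ne_top ?_
    (ENNReal.tsum_le_tsum fun n => (Complex.volume_ball (c n) (r n)).le))
  simp_rw [ENNReal.tsum_mul_right, ← ENNReal.ofReal_pow (hr0 _),
    ← ENNReal.ofReal_tsum_of_nonneg (fun n => sq_nonneg (r n)) hr]
  exact ENNReal.mul_ne_top ENNReal.ofReal_ne_top ENNReal.coe_ne_top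

theorem volume_setOf_frequently_norm_smul_sub_lt_eq_zero {E : Type*} [NormedAddCommGroup E]
    [NormedSpace ℂ E] {v : ℕ → E} (hv : ∀ n, v n ≠ 0) (hsum : Summable fun n => 1 / ‖v n‖)
    (w : ℕ → E) : volume {ζ : ℂ | ∃ᶠ n in atTop, ‖ζ • v n - w n‖ < 1} = 0 := by
  choose c hc using fun n => exists_setOf_norm_smul_sub_lt_subset_ball (𝕜 := ℂ) (hv n) (w n) 1
  have hr0 : ∀ n, 0 ≤ 1 / ‖v n‖ := fun n => by positivity
  refine measure_mono_null (fun ζ hζ => ?_)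
    (Complex.volume_limsup_ball_eq_zero (c := c) hr0 (hsum.sq_of_nonneg hr0))
  exact mem_limsup_iff_frequently_mem.2 (hζ.mono fun n hn => hc n hn)

theorem hypercyclicVectors_haarNull_general
    {X : Type*} [NormedAddCommGroup X] [NormedSpace ℂ X]
    [MeasurableSpace X] [BorelSpace X]
    (T : X →L[ℂ] X) (u : X) (hne : ∀ n : ℕ, (T ^ n) u ≠ 0)
    (hsum : Summable fun n : ℕ => 1 / ‖(T ^ n) u‖) :
    IsHaarNull (HypercyclicVectors T) := by
  have hu : u ≠ 0 := by simpa using hne 0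
  have : Nontrivial X := ⟨⟨u, 0, hu⟩⟩
  have hline : MeasurableEmbedding fun ζ : ℂ => ζ • u :=
    (isClosedEmbedding_smul_left hu).measurableEmbedding
  have : IsProbabilityMeasure (volume[|ball (0 : ℂ) 1]) :=
    cond_isProbabilityMeasure_of_finite (by simp [NNReal.pi_ne_zero]) measure_ball_lt_top.ne
  refine ⟨(volume[|ball (0 : ℂ) 1]).map (· • u),
    Measure.isProbabilityMeasure_map hline.measurable.aemeasurable, fun x => ?_⟩
  -- `x + HC(T)` need not be measurable; pulling back along a measurable embedding is still exact.
  rw [hline.map_apply]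
  refine cond_absolutelyContinuous (measure_mono_null ?_
    (volume_setOf_frequently_norm_smul_sub_lt_eq_zero hne hsum fun n => (T ^ n) x))
  rintro ζ ⟨z, hz, hzx⟩
  simp only at hzx
  refine (DenseRange.frequently_mem hz isOpen_ball ⟨0, mem_ball_self one_pos⟩).mono
    fun n hn => ?_
  rw [← map_smul, ← map_sub, ← hzx, add_sub_cancel_left]
  simpa using hn

/-- **Bayart–Matheron, Proposition 6.7.** If `T` is a continuous linear operator on a complex
Banach space and some vector `u` satisfies `∑ 1/‖Tⁿu‖ < ∞`, then the set of hypercyclic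
vectors of `T` is Haar-null. -/
theorem hypercyclicVectors_haarNull
    {X : Type*} [NormedAddCommGroup X] [NormedSpace ℂ X] [CompleteSpace X]
    [MeasurableSpace X] [BorelSpace X]
    (T : X →L[ℂ] X) (u : X) (hne : ∀ n : ℕ, (T ^ n) u ≠ 0)
    (hsum : Summable fun n : ℕ => 1 / ‖(T ^ n) u‖) :
    IsHaarNull (HypercyclicVectors T) :=
  hypercyclicVectors_haarNull_general T u hne hsum
end
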